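/- In the braid group B_n, the band generators satisfy a_{t,r} a_{t,s} = a_{s,r} a_{t,r} for all 1 ≤ r < s < t ≤ n. -/

import Mathlib

/-- The braid relations on the free group with generators indexed by `Fin (n-1)`
(generator `i` corresponds to the Artin generator `σ_{i+1}`). -/
def braidRels (n : ℕ) : Set (FreeGroup (Fin (n - 1))) :=
  {r | (∃ i j : Fin (n - 1), (i : ℕ) + 1 < (j : ℕ) ∧
        r = FreeGroup.of i * FreeGroup.of j * (FreeGroup.of i)⁻¹ * (FreeGroup.of j)⁻¹) ∨
       (∃ i j : Fin (n - 1), (i : ℕ) + 1 = (j : ℕ) ∧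
        r = FreeGroup.of i * FreeGroup.of j * FreeGroup.of i *
            (FreeGroup.of j * FreeGroup.of i * FreeGroup.of j)⁻¹)}

/-- The Artin braid group `B_n`. -/
def BraidGroup (n : ℕ) : Type := PresentedGroup (braidRels n)

instance (n : ℕ) : Group (BraidGroup n) := by unfold BraidGroup; infer_instance

/-- The Artin generator `σ_i` of `B_n`, for `1 ≤ i ≤ n - 1` (junk value `1` otherwise). -/
def braidGen {n : ℕ} (i : ℕ) : BraidGroup n :=
  if h : 1 ≤ i ∧ i < n then PresentedGroup.of (⟨i - 1, by omega⟩ : Fin (n - 1)) else 1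

/-- The word `σ_{t-1} σ_{t-2} ⋯ σ_{s+1}` in `B_n`. -/
def bandWord {n : ℕ} (t s : ℕ) : BraidGroup n :=
  (((List.range (t - 1 - s)).map (fun k => braidGen (n := n) (t - 1 - k))).prod)

/-- The band generator `a_{t,s} = (σ_{t-1} ⋯ σ_{s+1}) σ_s (σ_{s+1}⁻¹ ⋯ σ_{t-1}⁻¹)`. -/
def band {n : ℕ} (t s : ℕ) : BraidGroup n :=
  bandWord t s * braidGen s * (bandWord t s)⁻¹

/-
The band generators are built by iterated conjugation: `a_{s+1,s} = σ_s` and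
`a_{t+1,r} = σ_t a_{t,r} σ_t⁻¹`. Induction on `s` shows that `σ_s` and `a_{s,r}` satisfy the braid
relation, since conjugating a braid pair by a generator that commutes with one of them gives a
braid pair again. For `t = s + 1` the theorem is `(σ_s a σ_s⁻¹) σ_s = a (σ_s a σ_s⁻¹)` with
`a = a_{s,r}`, which is the braid relation between `σ_s` and `a`; larger `t` follow by conjugating
with `σ_t`, which fixes `a_{s,r}`.
-/

-- `a x a⁻¹ = x⁻¹ a x`, and conjugation by `x⁻¹` fixes `b`.
theorem braid_rel_conj {G : Type*} [Group G] {a b x : G} (hab : a * b * a = b * a * b)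
    (hxb : Commute x b) (hax : a * x * a = x * a * x) :
    b * MulAut.conj a x * b = MulAut.conj a x * b * MulAut.conj a x := by
  have hconj : MulAut.conj a x = MulAut.conj x⁻¹ a := by
    calc MulAut.conj a x = x⁻¹ * (x * a * x) * a⁻¹ := by rw [MulAut.conj_apply]; group
      _ = MulAut.conj x⁻¹ a := by rw [← hax, MulAut.conj_apply]; group
  have hb : MulAut.conj x⁻¹ b = b := hxb.inv_left.mul_inv_cancel
  rw [hconj, ← hb]
  simp only [← map_mul, hab]

theorem conj_mul_eq_mul_conj_of_braid_rel {G : Type*} [Group G] {a b : G}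
    (hab : a * b * a = b * a * b) : MulAut.conj a b * a = b * MulAut.conj a b := by
  rw [MulAut.conj_apply]
  calc a * b * a⁻¹ * a = a * b * a * a⁻¹ := by group
    _ = b * (a * b * a⁻¹) := by rw [hab]; group

section

variable {n : ℕ}

lemma braidGen_succ (i : Fin (n - 1)) : braidGen (n := n) (i + 1) = PresentedGroup.of i := by
  have h : 1 ≤ (i : ℕ) + 1 ∧ (i : ℕ) + 1 < n := by omega
  exact (dif_pos h).trans (congrArg PresentedGroup.of (Fin.ext (Nat.add_sub_cancel _ _)))

lemma braidGen_eq_one {i : ℕ} (h : ¬(1 ≤ i ∧ i < n)) : braidGen (n := n) i = 1 := dif_neg h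

lemma braidGen_commute {i j : ℕ} (h : i + 2 ≤ j) : Commute (braidGen (n := n) i) (braidGen j) := by
  by_cases hi : 1 ≤ i ∧ i < n
  · by_cases hj : 1 ≤ j ∧ j < n
    · obtain ⟨k, rfl⟩ : ∃ k : Fin (n - 1), i = k + 1 := ⟨⟨i - 1, by omega⟩, by simp only; omega⟩
      obtain ⟨l, rfl⟩ : ∃ l : Fin (n - 1), j = l + 1 := ⟨⟨j - 1, by omega⟩, by simp only; omega⟩
      rw [braidGen_succ, braidGen_succ]
      refine PresentedGroup.mk_eq_mk_of_mul_inv_mem ?_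
      rw [mul_inv_rev, ← mul_assoc]
      exact Or.inl ⟨k, l, by omega, rfl⟩
    · rw [braidGen_eq_one hj]; exact Commute.one_right _
  · rw [braidGen_eq_one hi]; exact Commute.one_left _

lemma braidGen_braid {i : ℕ} (h1 : 1 ≤ i) (h2 : i + 1 < n) :
    braidGen (n := n) i * braidGen (i + 1) * braidGen i
      = braidGen (i + 1) * braidGen i * braidGen (i + 1) := by
  obtain ⟨k, rfl⟩ : ∃ k : Fin (n - 1), i = k + 1 := ⟨⟨i - 1, by omega⟩, by simp only; omega⟩
  obtain ⟨l, hl⟩ : ∃ l : Fin (n - 1), (k : ℕ) + 1 + 1 = l + 1 := ⟨⟨k + 1, by omega⟩, rfl⟩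
  rw [hl, braidGen_succ, braidGen_succ]
  exact PresentedGroup.mk_eq_mk_of_mul_inv_mem (Or.inr ⟨k, l, by omega, rfl⟩)

lemma bandWord_of_le {t s : ℕ} (h : t ≤ s + 1) : bandWord (n := n) t s = 1 := by
  simp [bandWord, show t - 1 - s = 0 by omega]

lemma bandWord_succ {t s : ℕ} (h : s < t) :
    bandWord (n := n) (t + 1) s = braidGen t * bandWord t s := by
  unfold bandWord
  rw [show t + 1 - 1 - s = t - 1 - s + 1 by omega, List.range_succ_eq_map]
  simp only [List.map_cons, List.prod_cons, List.map_map, Nat.sub_zero, Nat.add_sub_cancel]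
  congr 2
  exact List.map_congr_left fun k _ => congrArg braidGen (by omega)

lemma band_succ_self (s : ℕ) : band (n := n) (s + 1) s = braidGen s := by
  simp [band, bandWord_of_le]

lemma band_succ {t r : ℕ} (h : r < t) :
    band (n := n) (t + 1) r = MulAut.conj (braidGen t) (band t r) := by
  simp only [band, bandWord_succ h, MulAut.conj_apply, mul_inv_rev]
  group

lemma band_commute_braidGen {s r j : ℕ} (hrs : r < s) (hsj : s < j) :
    Commute (band (n := n) s r) (braidGen j) := by
  induction s, hrs using Nat.le_induction with
  | base => rw [band_succ_self]; exact braidGen_commute (by omega)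
  | succ s hrs ih =>
    rw [band_succ hrs, MulAut.conj_apply]
    have hσ : Commute (braidGen (n := n) s) (braidGen j) := braidGen_commute (by omega)
    exact (hσ.mul_left (ih (by omega))).mul_left hσ.inv_left

lemma braidGen_band_braid {s r : ℕ} (hr : 1 ≤ r) (hrs : r < s) (hs : s < n) :
    braidGen (n := n) s * band s r * braidGen s = band s r * braidGen s * band s r := by
  induction s, hrs using Nat.le_induction with
  | base => rw [band_succ_self]; exact (braidGen_braid hr hs).symm
  | succ s hrs ih =>
    rw [band_succ hrs]
    exact braid_rel_conj (braidGen_braid (by omega) hs)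
      (band_commute_braidGen hrs (by omega)) (ih (by omega))

end

theorem stmt7 {n : ℕ} (r s t : ℕ) (h1 : 1 ≤ r) (h2 : r < s) (h3 : s < t) (h4 : t ≤ n) :
    band (n := n) t r * band t s = band s r * band t r := by
  induction t, h3 using Nat.le_induction with
  | base =>
    rw [band_succ_self, band_succ h2]
    exact conj_mul_eq_mul_conj_of_braid_rel (braidGen_band_braid h1 h2 (by omega))
  | succ t hst ih =>
    have hfix : MulAut.conj (braidGen t) (band (n := n) s r) = band s r :=
      (band_commute_braidGen h2 hst).symm.mul_inv_cancel
    rw [band_succ (h2.trans hst), band_succ hst, ← map_mul, ih (by omega), map_mul, hfix]
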